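/- arXiv:1503.04026 — 4 statements merged into one kernel-verified Lean document; each statement's English description precedes it below -/
import Mathlib

section
/- Let y : ℂ → ℂ be an entire function, not identically zero, satisfying the linear ODE with constant coefficients a_k·y^(k) + a_{k−1}·y^(k−1) + … + a_0·y = 0 (a_j ∈ ℂ, a_k ≠ 0), where y^(j) denotes the j-th complex derivative. Assume that any two distinct roots of the characteristic polynomial P(X) = a_k X^k + … + a_1 X + a_0 have distinct real parts. Then for every α ≥ 0 the set of zeros of y in the closed horizontal strip Π_α = {z ∈ ℂ : |Im z| ≤ α} is finite. -/
/-!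
Factoring the characteristic polynomial as `P = a_k ∏ (X - μ)` and peeling off one factor
`D - μ` at a time shows that `y` is an exponential polynomial `∑_λ c_λ(z) e^{λz}`, with `λ`
running over the roots of `P` and polynomial coefficients `c_λ`. In a horizontal strip, as
`Re z → +∞` the term whose `λ` has the largest real part dominates all the others, because the
real parts are distinct and the imaginary parts only contribute a bounded factor; hence `y` has
no zeros there, and symmetrically as `Re z → -∞`. The zeros in the strip therefore lie in a
compact set, where a nonzero entire function has only finitely many zeros.
-/

open Polynomial Complex Filter Topology Asymptotics

theorem Polynomial.exists_derivative_add_smul_eq (c : ℂ) (p : ℂ[X]) :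
    ∃ q, derivative q + c • q = p := by
  let T : ℂ[X] →ₗ[ℂ] ℂ[X] := derivative + c • LinearMap.id
  have hT (q : ℂ[X]) : T q = derivative q + c • q := rfl
  suffices hX : ∀ n : ℕ, X ^ n ∈ LinearMap.range T by
    obtain ⟨q, hq⟩ : p ∈ LinearMap.range T := by
      rw [p.as_sum_range_C_mul_X_pow]
      exact Submodule.sum_mem _ fun i _ => by
        rw [C_mul']; exact Submodule.smul_mem _ _ (hX i)
    exact ⟨q, hq⟩
  rcases eq_or_ne c 0 with rfl | hc
  · intro n
    refine ⟨C ((n + 1 : ℂ)⁻¹) * X ^ (n + 1), ?_⟩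
    rw [hT, derivative_C_mul_X_pow, zero_smul, add_zero]
    push_cast
    rw [inv_mul_cancel₀ (by exact_mod_cast n.succ_ne_zero), C_1, one_mul]
  · intro n
    induction n with
    | zero => exact ⟨C c⁻¹, by rw [hT]; simp [smul_C, hc]⟩
    | succ n ih =>
      have h : T (c⁻¹ • X ^ (n + 1)) = X ^ (n + 1) + (c⁻¹ * (n + 1)) • X ^ n := by
        rw [hT, derivative_smul, derivative_X_pow, smul_smul, mul_inv_cancel₀ hc, one_smul]
        simp only [Nat.add_sub_cancel, Nat.cast_add, Nat.cast_one, ← C_mul', C_mul]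
        ring
      have : X ^ (n + 1) = T (c⁻¹ • X ^ (n + 1)) - (c⁻¹ * (n + 1)) • X ^ n := by
        rw [h, add_sub_cancel_right]
      rw [this]
      exact Submodule.sub_mem _ (LinearMap.mem_range_self T _) (Submodule.smul_mem _ _ ih)

theorem Polynomial.isBigO_one_eval {𝕜 α : Type*} [NormedField 𝕜] {p : 𝕜[X]} (hp : p ≠ 0)
    {l : Filter α} {z : α → 𝕜} (hz : Tendsto (fun x => ‖z x‖) l atTop) :
    (fun _ => (1 : 𝕜)) =O[l] fun x => p.eval (z x) := by
  rcases lt_or_ge 0 p.degree with hdeg | hdeg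
  · refine IsBigO.of_bound 1 ?_
    filter_upwards [(p.tendsto_norm_atTop hdeg hz).eventually_ge_atTop 1] with x hx
    simpa using hx
  · rw [eq_C_of_degree_le_zero hdeg] at hp ⊢
    simpa using isBigO_const_const (1 : 𝕜) (fun h => hp (by rw [h, C_0])) l

def IsExpPoly (F : Finset ℂ) (f : ℂ → ℂ) : Prop :=
  ∃ c : ℂ → ℂ[X], ∀ z, f z = ∑ l ∈ F, (c l).eval z * cexp (l * z)

namespace IsExpPoly

variable {F G : Finset ℂ} {f g : ℂ → ℂ}

theorem add (hf : IsExpPoly F f) (hg : IsExpPoly F g) : IsExpPoly F (f + g) := by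
  obtain ⟨c, hc⟩ := hf
  obtain ⟨d, hd⟩ := hg
  exact ⟨c + d, fun z => by simp [hc, hd, add_mul, Finset.sum_add_distrib]⟩

theorem mono (hFG : F ⊆ G) (hf : IsExpPoly F f) : IsExpPoly G f := by
  classical
  obtain ⟨c, hc⟩ := hf
  refine ⟨fun l => if l ∈ F then c l else 0, fun z => ?_⟩
  rw [hc, ← Finset.sum_subset hFG fun l _ hl => by simp [hl]]
  exact Finset.sum_congr rfl fun l hl => by simp [hl]

theorem comp_neg (hf : IsExpPoly F f) :
    IsExpPoly (F.map (Equiv.neg ℂ).toEmbedding) (fun z => f (-z)) := by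
  obtain ⟨c, hc⟩ := hf
  refine ⟨fun l => (c (-l)).comp (-X), fun z => ?_⟩
  simp [hc]

theorem differentiable (hf : IsExpPoly F f) : Differentiable ℂ f := by
  obtain ⟨c, hc⟩ := hf
  rw [funext hc]
  fun_prop

end IsExpPoly

def entireFunctions : Submodule ℂ (ℂ → ℂ) where
  carrier := {f | Differentiable ℂ f}
  add_mem' := Differentiable.add
  zero_mem' := differentiable_const 0
  smul_mem' c _ hf := hf.const_smul c

instance : CoeFun entireFunctions (fun _ => ℂ → ℂ) := ⟨Subtype.val⟩

/-- Differentiation, so that `aeval derivEnd P` is the differential operator `P(d/dz)`. -/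
noncomputable def derivEnd : Module.End ℂ entireFunctions where
  toFun f := ⟨deriv f, Differentiable.deriv f.2⟩
  map_add' f g := Subtype.ext <| funext fun z => deriv_add (f.2 z) (g.2 z)
  map_smul' c f := Subtype.ext <| funext fun z => deriv_const_smul c (f.2 z)

@[simp]
theorem derivEnd_apply (f : entireFunctions) : (derivEnd f : ℂ → ℂ) = deriv f := rfl

theorem derivEnd_pow_apply (n : ℕ) (f : entireFunctions) :
    ((derivEnd ^ n) f : ℂ → ℂ) = iteratedDeriv n f := by
  induction n with
  | zero => rfl
  | succ n ih => rw [pow_succ', Module.End.mul_apply, iteratedDeriv_succ, ← ih]; rfl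

theorem aeval_derivEnd_sum_apply (s : Finset ℕ) (a : ℕ → ℂ) (f : entireFunctions) (z : ℂ) :
    (aeval derivEnd (∑ j ∈ s, C (a j) * X ^ j) f : ℂ → ℂ) z
      = ∑ j ∈ s, a j * iteratedDeriv j f z := by
  simp [derivEnd_pow_apply, Module.algebraMap_end_apply]

noncomputable def polyExp (q : ℂ[X]) (μ : ℂ) : entireFunctions :=
  ⟨fun z => q.eval z * cexp (μ * z), q.differentiable.mul (differentiable_id.const_mul μ).cexp⟩

theorem isExpPoly_polyExp (q : ℂ[X]) (μ : ℂ) : IsExpPoly {μ} (polyExp q μ) :=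
  ⟨fun _ => q, fun z => by simp [polyExp]⟩

theorem derivEnd_sub_polyExp (μ ν : ℂ) (q : ℂ[X]) :
    (derivEnd - algebraMap ℂ _ ν) (polyExp q μ) = polyExp (derivative q + (μ - ν) • q) μ := by
  refine Subtype.ext <| funext fun z => ?_
  have hd : HasDerivAt (fun z => q.eval z * cexp (μ * z))
      (q.derivative.eval z * cexp (μ * z) + q.eval z * (cexp (μ * z) * (μ * 1))) z :=
    (q.hasDerivAt z).mul ((hasDerivAt_id' z).const_mul μ).cexp
  change deriv (fun z => q.eval z * cexp (μ * z)) z - ν * (q.eval z * cexp (μ * z)) = _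
  simp only [hd.deriv, polyExp, eval_add, eval_smul, smul_eq_mul]
  ring

theorem exists_aeval_prod_polyExp_eq (s : Multiset ℂ) (μ : ℂ) (p : ℂ[X]) :
    ∃ q, aeval derivEnd (s.map (X - C ·)).prod (polyExp q μ) = polyExp p μ := by
  induction s using Multiset.induction_on generalizing p with
  | empty => exact ⟨p, by simp⟩
  | cons ν t ih =>
    obtain ⟨r, hr⟩ := exists_derivative_add_smul_eq (μ - ν) p
    obtain ⟨q, hq⟩ := ih r
    refine ⟨q, ?_⟩
    rw [Multiset.map_cons, Multiset.prod_cons, map_mul, Module.End.mul_apply, hq, map_sub,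
      aeval_X, aeval_C, derivEnd_sub_polyExp, hr]

theorem eq_polyExp_of_derivEnd_sub_eq_zero {μ : ℂ} {f : entireFunctions}
    (hf : (derivEnd - algebraMap ℂ _ μ) f = 0) : f = polyExp (C (f 0)) μ := by
  have hf' (z : ℂ) : deriv f z = μ * f z := by
    simpa [sub_eq_zero, Module.algebraMap_end_apply] using congr_fun (congrArg Subtype.val hf) z
  have hd (z : ℂ) : HasDerivAt (fun z => f z * cexp (-μ * z)) 0 z := by
    have := (f.2 z).hasDerivAt.mul ((hasDerivAt_id' z).const_mul (-μ)).cexp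
    rwa [hf', show μ * f z * cexp (-μ * z) + f z * (cexp (-μ * z) * (-μ * 1)) = 0 by ring]
      at this
  refine Subtype.ext <| funext fun z => ?_
  have hz := is_const_of_deriv_eq_zero (fun w => (hd w).differentiableAt) (fun w => (hd w).deriv)
    z 0
  show f z = (C (f 0)).eval z * cexp (μ * z)
  rw [mul_zero, Complex.exp_zero, mul_one] at hz
  rw [eval_C, ← hz, mul_assoc, ← Complex.exp_add]
  simp

theorem isExpPoly_of_aeval_prod_eq_zero (s : Multiset ℂ) {f : entireFunctions}
    (hf : aeval derivEnd (s.map (X - C ·)).prod f = 0) : IsExpPoly s.toFinset f := by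
  induction s using Multiset.induction_on generalizing f with
  | empty =>
    have : f = 0 := by simpa using hf
    exact ⟨0, by simp [this]⟩
  | cons μ t ih =>
    -- `T f` solves `g' = μ g`, so it is `C e^{μz}`; subtracting a `T`-preimage `q e^{μz}` of it
    -- from `f` leaves a solution of `T h = 0`.
    rw [Multiset.map_cons, Multiset.prod_cons, map_mul, Module.End.mul_apply, map_sub, aeval_X,
      aeval_C] at hf
    set T := aeval derivEnd (t.map (X - C ·)).prod
    obtain ⟨q, hq⟩ := exists_aeval_prod_polyExp_eq t μ (C (T f 0))
    have hrest : T (f - polyExp q μ) = 0 := by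
      rw [map_sub, hq, ← eq_polyExp_of_derivEnd_sub_eq_zero hf, sub_self]
    rw [Multiset.toFinset_cons]
    simpa using ((ih hrest).mono (Finset.subset_insert μ _)).add
      ((isExpPoly_polyExp q μ).mono (by simp))

theorem isExpPoly_of_aeval_eq_zero {P : ℂ[X]} (hP : P ≠ 0) {f : entireFunctions}
    (hf : aeval derivEnd P f = 0) : IsExpPoly P.roots.toFinset f := by
  refine isExpPoly_of_aeval_prod_eq_zero _ ?_
  rw [← C_leadingCoeff_mul_prod_multiset_X_sub_C (p := P) IsAlgClosed.card_roots_eq_natDegree,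
    map_mul, aeval_C, Module.End.mul_apply, Module.algebraMap_end_apply] at hf
  exact (smul_eq_zero.mp hf).resolve_left (leadingCoeff_ne_zero.mpr hP)

def stripAtTop (α : ℝ) : Filter ℂ :=
  comap re atTop ⊓ 𝓟 {z | |z.im| ≤ α}

theorem tendsto_re_stripAtTop (α : ℝ) : Tendsto re (stripAtTop α) atTop :=
  tendsto_comap.mono_left inf_le_left

theorem tendsto_norm_stripAtTop (α : ℝ) : Tendsto (‖·‖) (stripAtTop α) atTop :=
  tendsto_atTop_mono re_le_norm (tendsto_re_stripAtTop α)

theorem eventually_stripAtTop_iff {α : ℝ} {p : ℂ → Prop} :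
    (∀ᶠ z in stripAtTop α, p z) ↔ ∃ R, ∀ z : ℂ, R ≤ z.re → |z.im| ≤ α → p z := by
  simp only [stripAtTop, eventually_inf_principal, eventually_comap, eventually_atTop]
  exact ⟨fun ⟨R, h⟩ => ⟨R, fun z hz => h _ hz z rfl⟩,
    fun ⟨R, h⟩ => ⟨R, fun _ ht z hz => h z (hz ▸ ht)⟩⟩

theorem tendsto_pow_mul_exp_stripAtTop (α : ℝ) (n : ℕ) {w : ℂ} (hw : w.re < 0) :
    Tendsto (fun z => z ^ n * cexp (w * z)) (stripAtTop α) (𝓝 0) := by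
  have hreal : Tendsto (fun t => (2 * t) ^ n * Real.exp (w.re * t + |w.im| * α)) atTop (𝓝 0) := by
    have := ((isLittleO_pow_exp_pos_mul_atTop n (neg_pos.mpr hw)).tendsto_div_nhds_zero).const_mul
      (2 ^ n * Real.exp (|w.im| * α))
    rw [mul_zero] at this
    refine this.congr fun t => ?_
    rw [Real.exp_add, mul_pow, div_eq_mul_inv, ← Real.exp_neg]
    ring_nf
  refine squeeze_zero_norm' ?_ (hreal.comp (tendsto_re_stripAtTop α))
  refine eventually_stripAtTop_iff.mpr ⟨max α 0, fun z hre him => ?_⟩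
  have hnorm : ‖z‖ ≤ 2 * z.re := by
    have := norm_le_abs_re_add_abs_im z
    rw [abs_of_nonneg (le_of_max_le_right hre)] at this
    linarith [le_of_max_le_left hre]
  have hexp : (w * z).re ≤ w.re * z.re + |w.im| * α := by
    have := neg_abs_le (w.im * z.im)
    rw [abs_mul] at this
    rw [mul_re]
    nlinarith [abs_nonneg w.im]
  rw [norm_mul, norm_pow, norm_exp]
  exact mul_le_mul (pow_le_pow_left₀ (norm_nonneg z) hnorm n) (Real.exp_le_exp.mpr hexp)
    (Real.exp_pos _).le (pow_nonneg ((norm_nonneg z).trans hnorm) n)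

theorem tendsto_eval_mul_exp_stripAtTop (α : ℝ) (q : ℂ[X]) {w : ℂ} (hw : w.re < 0) :
    Tendsto (fun z => q.eval z * cexp (w * z)) (stripAtTop α) (𝓝 0) := by
  simp_rw [eval_eq_sum_range, Finset.sum_mul]
  rw [← Finset.sum_const_zero (s := Finset.range (q.natDegree + 1))]
  refine tendsto_finsetSum _ fun i _ => ?_
  simpa [mul_assoc] using (tendsto_pow_mul_exp_stripAtTop α i hw).const_mul (q.coeff i)

theorem isLittleO_eval_mul_exp_stripAtTop (α : ℝ) (p : ℂ[X]) {q : ℂ[X]} (hq : q ≠ 0) {l μ : ℂ}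
    (hlμ : l.re < μ.re) :
    (fun z => p.eval z * cexp (l * z)) =o[stripAtTop α] fun z => q.eval z * cexp (μ * z) := by
  have hdecay : (fun z => p.eval z * cexp ((l - μ) * z)) =o[stripAtTop α] fun _ => (1 : ℂ) :=
    (isLittleO_one_iff ℂ).mpr (tendsto_eval_mul_exp_stripAtTop α p (by simpa using hlμ))
  refine ((hdecay.trans_isBigO (q.isBigO_one_eval hq (tendsto_norm_stripAtTop α))).mul_isBigO
    (isBigO_refl (fun z => cexp (μ * z)) _)).congr_left fun z => ?_
  rw [mul_assoc, ← Complex.exp_add, sub_mul, sub_add_cancel]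

theorem IsExpPoly.eventually_ne_zero_stripAtTop {F : Finset ℂ} {f : ℂ → ℂ} (hf : IsExpPoly F f)
    (hF : Set.InjOn re F) (hf0 : f ≠ 0) (α : ℝ) : ∀ᶠ z in stripAtTop α, f z ≠ 0 := by
  classical
  obtain ⟨c, hc⟩ := hf
  set F' := F.filter (c · ≠ 0)
  have hc' (z : ℂ) : f z = ∑ l ∈ F', (c l).eval z * cexp (l * z) := by
    rw [hc, Finset.sum_filter_of_ne]
    intro l _ hl h
    simp [h] at hl
  obtain ⟨μ, hμ, hmax⟩ := F'.exists_max_image re <| Finset.nonempty_iff_ne_empty.mpr fun h =>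
    hf0 (funext fun z => by simp [hc', h])
  have hμF : μ ∈ F := Finset.mem_of_mem_filter μ hμ
  set g := fun z => (c μ).eval z * cexp (μ * z)
  have hcμ : c μ ≠ 0 := (Finset.mem_filter.mp hμ).2
  have hrest : (fun z => ∑ l ∈ F'.erase μ, (c l).eval z * cexp (l * z)) =o[stripAtTop α] g := by
    refine IsLittleO.fun_sum fun l hl => isLittleO_eval_mul_exp_stripAtTop α _ hcμ ?_
    obtain ⟨hlμ, hl⟩ := Finset.mem_erase.mp hl
    exact (hmax l hl).lt_of_ne fun h => hlμ (hF (Finset.mem_of_mem_filter l hl) hμF h)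
  have hg : ∀ᶠ z in stripAtTop α, g z ≠ 0 := by
    filter_upwards [(c μ).isBigO_one_eval hcμ (tendsto_norm_stripAtTop α) |>.eq_zero_imp]
      with z hz hgz
    exact one_ne_zero (hz (mul_eq_zero.mp hgz |>.resolve_right (Complex.exp_ne_zero _)))
  filter_upwards [hrest.def one_half_pos, hg] with z hz hgz hfz
  rw [hc', ← Finset.add_sum_erase _ _ hμ, add_eq_zero_iff_eq_neg'] at hfz
  rw [hfz, norm_neg] at hz
  exact hgz (norm_le_zero_iff.mp (by linarith))

theorem Differentiable.finite_inter_zeros_of_isCompact {f : ℂ → ℂ} (hf : Differentiable ℂ f)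
    (hf0 : f ≠ 0) {K : Set ℂ} (hK : IsCompact K) : (K ∩ f ⁻¹' {0}).Finite := by
  have hanalytic : AnalyticOnNhd ℂ f Set.univ := fun z _ => hf.analyticAt z
  have hne := (hanalytic.eqOn_zero_or_eventually_ne_zero_of_preconnected
    isPreconnected_univ).resolve_left fun h => hf0 (funext fun z => h (Set.mem_univ z))
  convert hK.finite_sdiff_of_mem_codiscreteWithin (codiscreteWithin_mono K.subset_univ hne) using 1
  ext z
  simp

theorem IsExpPoly.finite_zeros_strip {F : Finset ℂ} {f : ℂ → ℂ} (hf : IsExpPoly F f)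
    (hF : Set.InjOn re F) (hf0 : f ≠ 0) (α : ℝ) : {z : ℂ | |z.im| ≤ α ∧ f z = 0}.Finite := by
  obtain ⟨R₁, h₁⟩ := eventually_stripAtTop_iff.mp (hf.eventually_ne_zero_stripAtTop hF hf0 α)
  have hF' : Set.InjOn re (F.map (Equiv.neg ℂ).toEmbedding) := by
    simp only [Finset.coe_map, Equiv.coe_toEmbedding]
    rintro _ ⟨l, hl, rfl⟩ _ ⟨l', hl', rfl⟩ h
    simp only [Equiv.neg_apply, neg_re, neg_inj] at h ⊢
    exact hF hl hl' h
  obtain ⟨R₂, h₂⟩ := eventually_stripAtTop_iff.mp (hf.comp_neg.eventually_ne_zero_stripAtTop hF'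
    (fun h => hf0 (funext fun z => by simpa using congr_fun h (-z))) α)
  refine (hf.differentiable.finite_inter_zeros_of_isCompact hf0
    (isCompact_closedBall 0 (max R₁ R₂ + α))).subset fun z ⟨him, hz⟩ => ⟨?_, hz⟩
  have hre₁ : z.re < R₁ := not_le.mp fun h => h₁ z h him hz
  have hre₂ : -z.re < R₂ := not_le.mp fun h => h₂ (-z) (by simpa using h) (by simpa using him)
    (by simpa using hz)
  rw [Metric.mem_closedBall, dist_zero_right]
  refine (norm_le_abs_re_add_abs_im z).trans (add_le_add ?_ him)
  rw [abs_le]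
  constructor <;> linarith [le_max_left R₁ R₂, le_max_right R₁ R₂]

/-- An entire function `y`, not identically zero, satisfying a linear ODE
with constant coefficients whose distinct characteristic roots have distinct real parts,
has finitely many zeros in every closed horizontal strip `{z : |Im z| ≤ α}`. -/
theorem stmt_0 (k : ℕ) (a : ℕ → ℂ) (hak : a k ≠ 0)
    (y : ℂ → ℂ) (hy : Differentiable ℂ y) (hy0 : ∃ z, y z ≠ 0)
    (hode : ∀ z : ℂ, ∑ j ∈ Finset.range (k + 1), a j * iteratedDeriv j y z = 0)
    (hroots : ∀ μ ν : ℂ,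
      (∑ j ∈ Finset.range (k + 1), Polynomial.C (a j) * Polynomial.X ^ j).IsRoot μ →
      (∑ j ∈ Finset.range (k + 1), Polynomial.C (a j) * Polynomial.X ^ j).IsRoot ν →
      μ ≠ ν → μ.re ≠ ν.re) :
    ∀ α : ℝ, 0 ≤ α → {z : ℂ | |z.im| ≤ α ∧ y z = 0}.Finite := by
  intro α _
  set P : ℂ[X] := ∑ j ∈ Finset.range (k + 1), C (a j) * X ^ j
  have hP : P ≠ 0 := fun h => hak <| by
    simpa [P, finsetSum_coeff, coeff_C_mul_X_pow] using congr_arg (coeff · k) h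
  have hexp : IsExpPoly P.roots.toFinset y :=
    isExpPoly_of_aeval_eq_zero hP (f := ⟨y, hy⟩) <| Subtype.ext <| funext fun z =>
      (aeval_derivEnd_sum_apply _ a ⟨y, hy⟩ z).trans (hode z)
  have hinj : Set.InjOn re P.roots.toFinset := fun μ hμ ν hν h => by
    by_contra hne
    simp only [Finset.mem_coe, Multiset.mem_toFinset, mem_roots hP] at hμ hν
    exact hroots μ ν hμ hν hne h
  obtain ⟨z₀, hz₀⟩ := hy0
  exact hexp.finite_zeros_strip hinj (fun h => hz₀ (congr_fun h z₀)) α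
end

section
/- Let k ≥ 2, let λ_1, …, λ_k ∈ ℂ with Re λ_1 < Re λ_2 < … < Re λ_k, let a_1, …, a_k be nonzero complex numbers, and set y(z) = Σ_{j=1}^k a_j e^{λ_j z}. Then for every α ≥ 0 the complement Π_α \ G(y,α) can be covered by at most k−1 boxes of height 2α whose widths sum to at most 2α(k−1)Ξ + 2(k−1)Θ·ln 4. -/
/-!
Write `g_j(z) = log ‖a_j e^{λ_j z}‖ = log ‖a_j‖ + Re (λ_j z)` and, for each split point `m`,
`F_m = max_{j > m} g_j - max_{j ≤ m} g_j`. Along the real direction `F_m` grows at rate at least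
`δ_m = Re λ_{m+1} - Re λ_m`, so it has a real zero `β_m`, and moving vertically by `v` shifts it
horizontally by at most `Ξ |v|`; hence `|F_m(z)| ≥ δ_m (|Re z - β_m| - αΞ)` on the strip. If no
term dominates at `z`, the maximal term `j` is at most the sum of the others, and the term
`j.succAbove m` is at most `e^{-|F_m(z)|}` times it, so `1 ≤ f(Re z)`, where
`f(u) = Σ_m exp (-δ_m dist(u, [β_m - αΞ, β_m + αΞ]))`.

The set `{f ≥ 1}` is bounded, and `f` is convex on every interval that contains no `β_m` and has
its endpoints outside `{f ≥ 1}`, so each connected component of `{f ≥ 1}` contains some `β_m`: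
there are at most `k - 1` components. Their total length is at most
`vol {f ≥ 1} ≤ ∫ f = Σ_m (2αΞ + 2 / δ_m) ≤ (k - 1) (2αΞ + 2Θ)`, which is below the claimed bound
because `log 4 > 1`.
-/

open Set Filter Topology MeasureTheory Real Bornology

lemma exists_notMem_forall_lt {α : Type*} [LinearOrder α] {S : Set α} {P : Finset α} {x : α}
    (hPS : ∀ p ∈ P, p ∈ S) (h₀ : ∃ s ≤ x, s ∉ S) (hP : ∀ p ∈ P, p ≤ x → ∃ t ∈ Icc p x, t ∉ S) :
    ∃ s ≤ x, s ∉ S ∧ ∀ p ∈ P, p ≤ x → p < s := by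
  classical
  induction P using Finset.induction_on with
  | empty => simpa using h₀
  | insert p P _ ih =>
    simp only [Finset.forall_mem_insert] at hPS hP ⊢
    obtain ⟨s, hsx, hsS, hs⟩ := ih hPS.2 hP.2
    by_cases hpx : p ≤ x
    · obtain ⟨t, ⟨hpt, htx⟩, htS⟩ := hP.1 hpx
      have hpt' : p < t := hpt.lt_of_ne fun h => htS (h ▸ hPS.1)
      refine ⟨max s t, max_le hsx htx, ?_, fun _ => hpt'.trans_le (le_max_right s t),
        fun q hq hqx => (hs q hq hqx).trans_le (le_max_left s t)⟩
      rcases max_choice s t with h | h <;> rwa [h]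
    · exact ⟨s, hsx, hsS, fun h => absurd h hpx, hs⟩

theorem subset_iUnion_connectedComponentIn_of_gaps {S : Set ℝ} {P : Finset ℝ} (hS : IsBounded S)
    (hPS : ∀ p ∈ P, p ∈ S)
    (hgap : ∀ s t, s ∉ S → t ∉ S → (∀ p ∈ P, p < s ∨ t < p) → ∀ x ∈ Icc s t, x ∉ S) :
    S ⊆ ⋃ p ∈ P, connectedComponentIn S p := by
  intro x hx
  by_contra hxP
  have hout : ∀ p ∈ P, ∃ t ∈ uIcc x p, t ∉ S := fun p hp => not_subset.1 fun hsub =>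
    hxP (mem_biUnion hp (isPreconnected_uIcc.subset_connectedComponentIn right_mem_uIcc hsub
      left_mem_uIcc))
  obtain ⟨b, hb⟩ := hS.bddBelow
  obtain ⟨B, hB⟩ := hS.bddAbove
  obtain ⟨s, hsx, hsS, hs⟩ := exists_notMem_forall_lt (x := x) hPS
    ⟨min x b - 1, by linarith [min_le_left x b], fun h => by linarith [hb h, min_le_right x b]⟩
    fun p hp hpx => by simpa [uIcc_of_ge hpx] using hout p hp
  obtain ⟨t, hxt, htS, ht⟩ := exists_notMem_forall_lt (α := ℝᵒᵈ) (S := S) (x := OrderDual.toDual x)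
    hPS ⟨OrderDual.toDual (max x B + 1), show x ≤ max x B + 1 by linarith [le_max_left x B],
      fun h => by linarith [hB (show max x B + 1 ∈ S from h), le_max_right x B]⟩
    fun p hp hxp => by
      obtain ⟨t, ht, htS⟩ := hout p hp
      rw [uIcc_of_le (show x ≤ p from hxp)] at ht
      exact ⟨OrderDual.toDual t, ⟨ht.2, ht.1⟩, htS⟩
  exact hgap s t hsS htS (fun p hp => (le_total p x).imp (hs p hp) (ht p hp)) x ⟨hsx, hxt⟩ hx

lemma sdiff_connectedComponentIn_subset_iUnion {α : Type*} [TopologicalSpace α] [DecidableEq α]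
    {S : Set α} {p : α} {P : Finset α} (hP : S ⊆ ⋃ q ∈ insert p P, connectedComponentIn S q) :
    S \ connectedComponentIn S p ⊆
      ⋃ q ∈ P, connectedComponentIn (S \ connectedComponentIn S p) q := by
  rintro x ⟨hxS, hxp⟩
  obtain ⟨q, hq, hxq⟩ := mem_iUnion₂.1 (hP hxS)
  have hqp : q ≠ p := by rintro rfl; exact hxp hxq
  have hsub : connectedComponentIn S q ⊆ S \ connectedComponentIn S p := fun y hy =>
    ⟨connectedComponentIn_subset S q hy, fun hyp => hxp <| by
      rwa [connectedComponentIn_eq hyp, ← connectedComponentIn_eq hy]⟩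
  exact mem_biUnion (Finset.mem_of_mem_insert_of_ne hq hqp)
    (isPreconnected_connectedComponentIn.subset_connectedComponentIn
      (mem_connectedComponentIn (connectedComponentIn_nonempty_iff.1 ⟨x, hxq⟩)) hsub hxq)

lemma sSup_sub_sInf_le_measureReal {C : Set ℝ} (hC : IsPreconnected C) (hb : IsBounded C) :
    sSup C - sInf C ≤ volume.real C := by
  rcases C.eq_empty_or_nonempty with rfl | hne
  · simp
  have hle := Real.sInf_le_sSup C hb.bddBelow hb.bddAbove
  calc sSup C - sInf C = volume.real (Ioo (sInf C) (sSup C)) := by simp [hle]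
    _ ≤ volume.real C := measureReal_mono
        ((IsConnected.Ioo_csInf_csSup_subset ⟨hne, hC⟩ hb.bddBelow hb.bddAbove))
        hb.measure_lt_top.ne

theorem exists_intervals_cover_of_subset_iUnion_connectedComponentIn {S : Set ℝ} (hS : IsBounded S)
    {P : Finset ℝ} (hP : S ⊆ ⋃ p ∈ P, connectedComponentIn S p) :
    ∃ (N : ℕ) (c w : ℕ → ℝ), N ≤ P.card ∧ (∀ i, 0 ≤ w i) ∧
      ∑ i ∈ Finset.range N, w i ≤ volume.real S ∧
      ∀ x ∈ S, ∃ i < N, c i ≤ x ∧ x ≤ c i + w i := by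
  classical
  induction P using Finset.induction_on generalizing S with
  | empty => exact ⟨0, 0, 0, le_rfl, fun _ => le_rfl, by simp, fun x hx => by simpa using hP hx⟩
  | insert p P hp ih =>
    set C := connectedComponentIn S p
    have hCS : C ⊆ S := connectedComponentIn_subset S p
    have hCb : IsBounded C := hS.subset hCS
    obtain ⟨N, c, w, hN, hw, hsum, hcov⟩ :=
      ih (hS.subset sdiff_subset) (sdiff_connectedComponentIn_subset_iUnion hP)
    refine ⟨N + 1, Function.update c N (sInf C), Function.update w N (sSup C - sInf C),
      ?_, ?_, ?_, ?_⟩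
    · rw [Finset.card_insert_of_notMem hp]; omega
    · intro i
      rcases eq_or_ne i N with rfl | hi
      · simpa using Real.sInf_le_sSup C hCb.bddBelow hCb.bddAbove
      · simpa [Function.update_of_ne hi] using hw i
    · have hCmeas : MeasurableSet C := isPreconnected_connectedComponentIn.measurableSet
      rw [Finset.sum_range_succ, Function.update_self, Finset.sum_congr rfl fun i hi =>
        Function.update_of_ne (Finset.mem_range.1 hi).ne _ w, ← measureReal_sdiff_add_inter hCmeas
        hS.measure_lt_top.ne, inter_eq_right.2 hCS]
      exact add_le_add hsum (sSup_sub_sInf_le_measureReal isPreconnected_connectedComponentIn hCb)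
    · intro x hx
      by_cases hxC : x ∈ C
      · refine ⟨N, N.lt_succ_self, ?_, ?_⟩ <;> simp only [Function.update_self]
        · exact csInf_le hCb.bddBelow hxC
        · linarith [le_csSup hCb.bddAbove hxC]
      · obtain ⟨i, hi, hci, hcw⟩ := hcov x ⟨hx, hxC⟩
        refine ⟨i, hi.trans N.lt_succ_self, ?_⟩
        simpa [Function.update_of_ne hi.ne] using ⟨hci, hcw⟩

noncomputable def expBump (c r δ u : ℝ) : ℝ := exp (-(δ * max (|u - c| - r) 0))

section ExpBump

variable {c r δ u : ℝ}

lemma expBump_eq_one (h : |u - c| ≤ r) : expBump c r δ u = 1 := by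
  simp [expBump, max_eq_right (sub_nonpos.2 h)]

lemma lt_abs_sub_of_expBump_lt_one (h : expBump c r δ u < 1) : r < |u - c| :=
  not_le.1 fun h' => h.ne (expBump_eq_one h')

lemma expBump_nonneg : 0 ≤ expBump c r δ u := (exp_pos _).le

lemma convexOn_exp_mul_add (a b : ℝ) : ConvexOn ℝ univ fun u => exp (a * u + b) := by
  simpa [Function.comp_def] using
    convexOn_exp.comp_affineMap ((a • AffineMap.id ℝ ℝ) + AffineMap.const ℝ ℝ b)

lemma convexOn_expBump_Ici (hr : 0 ≤ r) : ConvexOn ℝ (Ici (c + r)) (expBump c r δ) := by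
  refine ((convexOn_exp_mul_add (-δ) (δ * (c + r))).subset (subset_univ _) (convex_Ici _)).congr
    fun u (hu : c + r ≤ u) => ?_
  rw [expBump, abs_of_nonneg (by linarith), max_eq_left (by linarith)]
  ring_nf

lemma convexOn_expBump_Iic (hr : 0 ≤ r) : ConvexOn ℝ (Iic (c - r)) (expBump c r δ) := by
  refine ((convexOn_exp_mul_add δ (-(δ * (c - r)))).subset (subset_univ _) (convex_Iic _)).congr
    fun u (hu : u ≤ c - r) => ?_
  rw [expBump, abs_of_nonpos (by linarith), max_eq_left (by linarith)]
  ring_nf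

lemma tendsto_expBump_cocompact (hδ : 0 < δ) : Tendsto (expBump c r δ) (cocompact ℝ) (𝓝 0) := by
  have hdist : Tendsto (fun u => |u - c|) (cocompact ℝ) atTop :=
    tendsto_atTop_mono (fun u => by simpa [sub_eq_add_neg] using abs_sub_abs_le_abs_sub u c)
      (tendsto_atTop_add_const_right _ (-|c|) tendsto_norm_cocompact_atTop)
  have hmax : Tendsto (fun u => max (|u - c| - r) 0) (cocompact ℝ) atTop :=
    tendsto_atTop_mono (fun _ => le_max_left _ _) (tendsto_atTop_add_const_right _ (-r) hdist)
  exact tendsto_exp_atBot.comp (tendsto_neg_atTop_atBot.comp (hmax.const_mul_atTop hδ))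

lemma integral_exp_neg_mul_max_Ioi (hδ : 0 < δ) (hr : 0 ≤ r) :
    ∫ x in Ioi 0, exp (-(δ * max (x - r) 0)) = r + 1 / δ := by
  have hexp : EqOn (fun x => exp (-(δ * max (x - r) 0))) (fun x => exp (-δ * x) * exp (δ * r))
      (Ioi r) := fun x (hx : r < x) => by
    dsimp only
    rw [max_eq_left (by linarith), ← exp_add]; ring_nf
  have hint : IntegrableOn (fun x => exp (-(δ * max (x - r) 0))) (Ioi r) :=
    IntegrableOn.congr_fun ((integrableOn_exp_mul_Ioi (neg_neg_of_pos hδ) r).mul_const _)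
      hexp.symm measurableSet_Ioi
  rw [← Ioc_union_Ioi_eq_Ioi hr, setIntegral_union Ioc_disjoint_Ioi_same measurableSet_Ioi
    (by fun_prop : Continuous _).integrableOn_Ioc hint,
    setIntegral_congr_fun measurableSet_Ioi hexp,
    setIntegral_congr_fun measurableSet_Ioc (g := fun _ => 1)
      fun x (hx : 0 < x ∧ x ≤ r) => by simp [max_eq_right (sub_nonpos.2 hx.2)],
    integral_mul_const, integral_exp_mul_Ioi (neg_neg_of_pos hδ)]
  field_simp
  simp [← exp_add, hr, mul_comm]

lemma integral_expBump (hδ : 0 < δ) (hr : 0 ≤ r) : ∫ u, expBump c r δ u = 2 * r + 2 / δ := by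
  rw [show (2 : ℝ) * r + 2 / δ = 2 * (r + 1 / δ) by ring, ← integral_exp_neg_mul_max_Ioi hδ hr,
    ← integral_comp_abs (f := fun x => exp (-(δ * max (x - r) 0)))]
  exact integral_sub_right_eq_self (μ := volume) (fun u => exp (-(δ * max (|u| - r) 0))) c

lemma integrable_expBump (hδ : 0 < δ) (hr : 0 ≤ r) : Integrable (expBump c r δ) :=
  Integrable.of_integral_ne_zero (by rw [integral_expBump hδ hr]; positivity)

end ExpBump

section SumExpBump

variable {ι : Type*} [Fintype ι] {c r δ : ι → ℝ}

lemma isBounded_setOf_one_le_sum_expBump (hδ : ∀ m, 0 < δ m) :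
    IsBounded {u | 1 ≤ ∑ m, expBump (c m) (r m) (δ m) u} := by
  have h : Tendsto (fun u => ∑ m, expBump (c m) (r m) (δ m) u) (cocompact ℝ) (𝓝 0) := by
    simpa using tendsto_finsetSum Finset.univ fun m _ => tendsto_expBump_cocompact (hδ m)
  rw [isBounded_def, Metric.cobounded_eq_cocompact]
  filter_upwards [h.eventually (gt_mem_nhds one_pos)] with u hu using not_le.2 hu

lemma measureReal_setOf_one_le_sum_expBump_le (hδ : ∀ m, 0 < δ m) (hr : ∀ m, 0 ≤ r m) :
    volume.real {u | 1 ≤ ∑ m, expBump (c m) (r m) (δ m) u} ≤ ∑ m, (2 * r m + 2 / δ m) := by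
  have hint m : Integrable (expBump (c m) (r m) (δ m)) := integrable_expBump (hδ m) (hr m)
  calc volume.real {u | 1 ≤ ∑ m, expBump (c m) (r m) (δ m) u}
      ≤ ∫ u, ∑ m, expBump (c m) (r m) (δ m) u := by
        simpa using mul_meas_ge_le_integral_of_nonneg
          (ae_of_all _ fun u => Finset.sum_nonneg fun m _ => expBump_nonneg)
          (integrable_finsetSum _ fun m _ => hint m) 1
    _ = ∑ m, (2 * r m + 2 / δ m) := by
        rw [integral_finsetSum _ fun m _ => hint m]
        exact Finset.sum_congr rfl fun m _ => integral_expBump (hδ m) (hr m)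

lemma sum_expBump_lt_one_of_mem_Icc (hr : ∀ m, 0 ≤ r m) {s t x : ℝ}
    (hs : ∑ m, expBump (c m) (r m) (δ m) s < 1) (ht : ∑ m, expBump (c m) (r m) (δ m) t < 1)
    (hc : ∀ m, c m < s ∨ t < c m) (hx : x ∈ Icc s t) :
    ∑ m, expBump (c m) (r m) (δ m) x < 1 := by
  have hlt {y : ℝ} (hy : ∑ m, expBump (c m) (r m) (δ m) y < 1) (m : ι) : r m < |y - c m| :=
    lt_abs_sub_of_expBump_lt_one <| (Finset.single_le_sum (fun m _ => expBump_nonneg)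
      (Finset.mem_univ m)).trans_lt hy
  have hconv : ConvexOn ℝ (Icc s t) (∑ m, expBump (c m) (r m) (δ m)) :=
    Finset.sum_induction _ (ConvexOn ℝ (Icc s t)) (fun _ _ => ConvexOn.add)
      (convexOn_const 0 (convex_Icc s t)) fun m _ => by
        rcases hc m with h | h
        · have := hlt hs m
          rw [abs_of_pos (sub_pos.2 h)] at this
          exact (convexOn_expBump_Ici (hr m)).subset (fun y hy => by
            simp only [mem_Ici]; linarith [hy.1]) (convex_Icc s t)
        · have := hlt ht m
          rw [abs_of_neg (sub_neg.2 h)] at this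
          exact (convexOn_expBump_Iic (hr m)).subset (fun y hy => by
            simp only [mem_Iic]; linarith [hy.2]) (convex_Icc s t)
  have hst : s ≤ t := hx.1.trans hx.2
  simpa using (hconv.le_on_segment (left_mem_Icc.2 hst) (right_mem_Icc.2 hst)
    (by rwa [segment_eq_Icc hst])).trans_lt (by simpa using max_lt hs ht)

theorem exists_intervals_cover_setOf_one_le_sum_expBump (hδ : ∀ m, 0 < δ m) (hr : ∀ m, 0 ≤ r m) :
    ∃ (N : ℕ) (a w : ℕ → ℝ), N ≤ Fintype.card ι ∧ (∀ i, 0 ≤ w i) ∧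
      ∑ i ∈ Finset.range N, w i ≤ ∑ m, (2 * r m + 2 / δ m) ∧
      ∀ u, 1 ≤ ∑ m, expBump (c m) (r m) (δ m) u → ∃ i < N, a i ≤ u ∧ u ≤ a i + w i := by
  classical
  have hS := isBounded_setOf_one_le_sum_expBump (c := c) (r := r) hδ
  have hcS (m : ι) : 1 ≤ ∑ m', expBump (c m') (r m') (δ m') (c m) :=
    (expBump_eq_one (by simpa using hr m)).symm.le.trans
      (Finset.single_le_sum (fun m' _ => expBump_nonneg) (Finset.mem_univ m))
  have hP := subset_iUnion_connectedComponentIn_of_gaps (P := Finset.univ.image c) hS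
    (by simpa using hcS) fun s t hs ht hc x hx =>
      not_le.2 <| sum_expBump_lt_one_of_mem_Icc hr (not_le.1 hs) (not_le.1 ht)
        (fun m => hc (c m) (Finset.mem_image_of_mem c (Finset.mem_univ m))) hx
  obtain ⟨N, a, w, hN, hw, hsum, hcov⟩ :=
    exists_intervals_cover_of_subset_iUnion_connectedComponentIn hS hP
  exact ⟨N, a, w, hN.trans (Finset.card_image_le.trans_eq Finset.card_univ), hw,
    hsum.trans (measureReal_setOf_one_le_sum_expBump_le hδ hr), hcov⟩

end SumExpBump

lemma Finset.sup'_sub_sup'_add_le {ι : Type*} {s t : Finset ι} (hs : s.Nonempty) (ht : t.Nonempty)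
    {g g' : ι → ℝ} {c : ℝ} (h : ∀ i ∈ s, ∀ j ∈ t, g j - g i + c ≤ g' j - g' i) :
    t.sup' ht g - s.sup' hs g + c ≤ t.sup' ht g' - s.sup' hs g' := by
  obtain ⟨j, hj, hgj⟩ := t.exists_mem_eq_sup' ht g
  obtain ⟨i, hi, hgi⟩ := s.exists_mem_eq_sup' hs g'
  linarith [h i hi j hj, s.le_sup' g hi, t.le_sup' g' hj]

section SplitGap

variable {n : ℕ}

lemma Fin.nonempty_Ioi_castSucc (m : Fin n) : (Finset.Ioi m.castSucc).Nonempty :=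
  ⟨m.succ, Finset.mem_Ioi.2 m.castSucc_lt_succ⟩

noncomputable def splitGap (g : Fin (n + 1) → ℝ) (m : Fin n) : ℝ :=
  (Finset.Ioi m.castSucc).sup' m.nonempty_Ioi_castSucc g -
    (Finset.Iic m.castSucc).sup' Finset.nonempty_Iic g

lemma splitGap_add_le {g g' : Fin (n + 1) → ℝ} {c : ℝ} {m : Fin n}
    (h : ∀ i j, i ≤ m.castSucc → m.castSucc < j → g j - g i + c ≤ g' j - g' i) :
    splitGap g m + c ≤ splitGap g' m :=
  Finset.sup'_sub_sup'_add_le _ _ fun i hi j hj => h i j (Finset.mem_Iic.1 hi) (Finset.mem_Ioi.1 hj)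

lemma abs_splitGap_le {g : Fin (n + 1) → ℝ} {j : Fin (n + 1)} (hj : ∀ i, g i ≤ g j) (m : Fin n) :
    |splitGap g m| ≤ g j - g (j.succAbove m) := by
  have hup := Finset.sup'_le m.nonempty_Ioi_castSucc g fun i _ => hj i
  have hlow := Finset.sup'_le (Finset.nonempty_Iic (a := m.castSucc)) g fun i _ => hj i
  rw [splitGap, abs_le]
  rcases lt_or_ge m.castSucc j with h | h
  · rw [Fin.succAbove_of_castSucc_lt _ _ h]
    have := Finset.le_sup' g (Finset.mem_Ioi.2 h)
    have := Finset.le_sup' g (Finset.mem_Iic.2 (le_refl m.castSucc))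
    constructor <;> linarith [hj m.castSucc]
  · rw [Fin.succAbove_of_le_castSucc _ _ h]
    have := Finset.le_sup' g (Finset.mem_Iic.2 h)
    have := Finset.le_sup' g (Finset.mem_Ioi.2 m.castSucc_lt_succ)
    constructor <;> linarith [hj m.succ]

lemma one_le_sum_exp_neg_abs_splitGap {g : Fin (n + 1) → ℝ}
    (h : ∀ j, 2 * exp (g j) ≤ ∑ i, exp (g i)) : 1 ≤ ∑ m, exp (-|splitGap g m|) := by
  obtain ⟨j, -, hj⟩ := Finset.univ.exists_max_image g Finset.univ_nonempty
  have hterm (m : Fin n) : exp (g (j.succAbove m)) ≤ exp (g j) * exp (-|splitGap g m|) := by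
    rw [← exp_add, exp_le_exp]
    linarith [abs_splitGap_le (fun i => hj i (Finset.mem_univ i)) m]
  have hsum := h j
  rw [Fin.sum_univ_succAbove _ j] at hsum
  refine (le_mul_iff_one_le_right (exp_pos (g j))).1 ?_
  rw [Finset.mul_sum]
  linarith [Finset.sum_le_sum fun m (_ : m ∈ Finset.univ) => hterm m]

end SplitGap

lemma Fin.abs_sub_le_mul_sub_of_succ {n : ℕ} {f g : Fin (n + 1) → ℝ} {K : ℝ}
    (h : ∀ m : Fin n, |f m.succ - f m.castSucc| ≤ K * (g m.succ - g m.castSucc)) {i j : Fin (n + 1)}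
    (hij : i ≤ j) : |f j - f i| ≤ K * (g j - g i) := by
  have hsub : Monotone fun i => K * g i - f i :=
    Fin.monotone_iff_le_succ.2 fun m => by linarith [(abs_le.1 (h m)).2]
  have hadd : Monotone fun i => K * g i + f i :=
    Fin.monotone_iff_le_succ.2 fun m => by linarith [(abs_le.1 (h m)).1]
  have h₁ : K * g i - f i ≤ K * g j - f j := hsub hij
  have h₂ : K * g i + f i ≤ K * g j + f j := hadd hij
  exact abs_le.2 ⟨by linarith, by linarith⟩

section Exponentials

variable {n : ℕ} (a l : Fin (n + 1) → ℂ)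

noncomputable def logNormTerm (z : ℂ) (j : Fin (n + 1)) : ℝ := Real.log ‖a j‖ + (l j * z).re

variable {a l}

lemma norm_mul_cexp_eq {j : Fin (n + 1)} (ha : a j ≠ 0) (z : ℂ) :
    ‖a j * Complex.exp (l j * z)‖ = exp (logNormTerm a l z j) := by
  rw [norm_mul, Complex.norm_exp, logNormTerm, exp_add, exp_log (norm_pos_iff.2 ha)]

lemma logNormTerm_add_ofReal (z : ℂ) (t : ℝ) (j : Fin (n + 1)) :
    logNormTerm a l (z + t) j = logNormTerm a l z j + (l j).re * t := by
  simp only [logNormTerm, mul_add, Complex.add_re, Complex.mul_re, Complex.ofReal_re,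
    Complex.ofReal_im, mul_zero, sub_zero]
  ring

lemma splitGap_add_mul_le (hre : Monotone fun j => (l j).re) (m : Fin n) (z : ℂ) {t : ℝ}
    (ht : 0 ≤ t) :
    splitGap (logNormTerm a l z) m + ((l m.succ).re - (l m.castSucc).re) * t ≤
      splitGap (logNormTerm a l (z + t)) m := by
  refine splitGap_add_le fun i j hi hj => ?_
  simp only [logNormTerm_add_ofReal]
  have := hre hi
  have := hre (Fin.castSucc_lt_iff_succ_le.1 hj)
  nlinarith

lemma splitGap_ofReal_sub_le_le_splitGap_ofReal_add
    (hΞ : ∀ i j : Fin (n + 1), i ≤ j → |(l j).im - (l i).im| ≤ Ξ * ((l j).re - (l i).re))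
    (m : Fin n) (z : ℂ) :
    splitGap (logNormTerm a l ↑(z.re - Ξ * |z.im|)) m ≤ splitGap (logNormTerm a l z) m ∧
      splitGap (logNormTerm a l z) m ≤ splitGap (logNormTerm a l ↑(z.re + Ξ * |z.im|)) m := by
  have key {i j : Fin (n + 1)} (hij : i ≤ j) :
      |((l j).im - (l i).im) * z.im| ≤ Ξ * ((l j).re - (l i).re) * |z.im| :=
    (abs_mul _ _).trans_le (mul_le_mul_of_nonneg_right (hΞ i j hij) (abs_nonneg _))
  constructor <;>
  · simpa only [add_zero] using splitGap_add_le (c := 0) fun i j hi hj => by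
      have := abs_le.1 (key (hi.trans hj.le))
      simp only [logNormTerm, Complex.mul_re, Complex.ofReal_re, Complex.ofReal_im]
      nlinarith

lemma exists_splitGap_ofReal_eq_zero (hre : Monotone fun j => (l j).re) {m : Fin n}
    (hδ : 0 < (l m.succ).re - (l m.castSucc).re) :
    ∃ β : ℝ, splitGap (logNormTerm a l β) m = 0 := by
  set δ := (l m.succ).re - (l m.castSucc).re
  set F := fun u : ℝ => splitGap (logNormTerm a l u) m
  have hcont : Continuous F := by
    refine (Continuous.finset_sup'_apply _ fun j _ => ?_).sub
      (Continuous.finset_sup'_apply _ fun j _ => ?_) <;>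
    · unfold logNormTerm; fun_prop
  have hgrow (u t : ℝ) (ht : 0 ≤ t) : F u + δ * t ≤ F (u + t) := by
    simpa [F] using splitGap_add_mul_le hre m u ht
  set T := |F 0| / δ
  have hT : δ * T = |F 0| := mul_div_cancel₀ _ hδ.ne'
  have hT0 : 0 ≤ T := by positivity
  have h₁ := hgrow 0 T hT0
  have h₂ := hgrow (-T) T hT0
  rw [zero_add] at h₁
  rw [neg_add_cancel] at h₂
  exact intermediate_value_univ (-T) T hcont
    ⟨by linarith [le_abs_self (F 0)], by linarith [neg_abs_le (F 0)]⟩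

lemma mul_sub_le_abs_splitGap (hre : Monotone fun j => (l j).re)
    (hΞ : ∀ i j : Fin (n + 1), i ≤ j → |(l j).im - (l i).im| ≤ Ξ * ((l j).re - (l i).re))
    (hΞ0 : 0 ≤ Ξ) {m : Fin n} {β : ℝ} (hβ : splitGap (logNormTerm a l β) m = 0) (z : ℂ) :
    ((l m.succ).re - (l m.castSucc).re) * (|z.re - β| - Ξ * |z.im|) ≤
      |splitGap (logNormTerm a l z) m| := by
  set δ := (l m.succ).re - (l m.castSucc).re
  have hδ : 0 ≤ δ := sub_nonneg.2 (hre (Fin.castSucc_le_succ m))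
  obtain ⟨hlow, hup⟩ := splitGap_ofReal_sub_le_le_splitGap_ofReal_add (a := a) hΞ m z
  have hΞz : 0 ≤ Ξ * |z.im| := mul_nonneg hΞ0 (abs_nonneg _)
  rcases le_total β (z.re - Ξ * |z.im|) with h | h
  · have := splitGap_add_mul_le (a := a) hre m β (sub_nonneg.2 h)
    rw [← Complex.ofReal_add, add_sub_cancel, hβ, zero_add] at this
    rw [abs_of_nonneg (by linarith : 0 ≤ z.re - β)]
    linarith [le_abs_self (splitGap (logNormTerm a l z) m)]
  rcases le_total (z.re + Ξ * |z.im|) β with h' | h'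
  · have := splitGap_add_mul_le (a := a) hre m ((z.re + Ξ * |z.im| : ℝ) : ℂ) (sub_nonneg.2 h')
    rw [← Complex.ofReal_add, add_sub_cancel, hβ] at this
    rw [abs_of_nonpos (by linarith : z.re - β ≤ 0)]
    linarith [neg_abs_le (splitGap (logNormTerm a l z) m)]
  · have : |z.re - β| ≤ Ξ * |z.im| := abs_le.2 ⟨by linarith, by linarith⟩
    exact (mul_nonpos_of_nonneg_of_nonpos hδ (by linarith)).trans (abs_nonneg _)

lemma exp_neg_abs_splitGap_le_expBump (hre : Monotone fun j => (l j).re)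
    (hΞ : ∀ i j : Fin (n + 1), i ≤ j → |(l j).im - (l i).im| ≤ Ξ * ((l j).re - (l i).re))
    (hΞ0 : 0 ≤ Ξ) {m : Fin n} {β : ℝ} (hβ : splitGap (logNormTerm a l β) m = 0) {α : ℝ} {z : ℂ}
    (hz : |z.im| ≤ α) :
    exp (-|splitGap (logNormTerm a l z) m|) ≤
      expBump β (α * Ξ) ((l m.succ).re - (l m.castSucc).re) z.re := by
  rw [expBump, exp_le_exp, neg_le_neg_iff]
  rcases le_total (|z.re - β| - α * Ξ) 0 with h | h
  · rw [max_eq_right h, mul_zero]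
    exact abs_nonneg _
  · rw [max_eq_left h]
    refine le_trans (mul_le_mul_of_nonneg_left ?_ (sub_nonneg.2 (hre (Fin.castSucc_le_succ m))))
      (mul_sub_le_abs_splitGap hre hΞ hΞ0 hβ z)
    nlinarith [mul_le_mul_of_nonneg_left hz hΞ0]

theorem exists_intervals_cover_of_forall_two_mul_le (ha : ∀ j, a j ≠ 0)
    (hre : ∀ m : Fin n, (l m.castSucc).re < (l m.succ).re)
    (hΞ : ∀ m : Fin n,
      |(l m.succ).im - (l m.castSucc).im| ≤ Ξ * ((l m.succ).re - (l m.castSucc).re))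
    {α : ℝ} (hα : 0 ≤ α) :
    ∃ (N : ℕ) (c w : ℕ → ℝ), N ≤ n ∧ (∀ i, 0 ≤ w i) ∧
      ∑ i ∈ Finset.range N, w i ≤
        ∑ m : Fin n, (2 * (α * Ξ) + 2 / ((l m.succ).re - (l m.castSucc).re)) ∧
      ∀ z : ℂ, |z.im| ≤ α →
        (∀ j, 2 * ‖a j * Complex.exp (l j * z)‖ ≤ ∑ i, ‖a i * Complex.exp (l i * z)‖) →
        ∃ i < N, c i ≤ z.re ∧ z.re ≤ c i + w i := by
  have hmono : Monotone fun j => (l j).re := Fin.monotone_iff_le_succ.2 fun m => (hre m).le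
  have hΞ' (i j : Fin (n + 1)) (hij : i ≤ j) :
      |(l j).im - (l i).im| ≤ Ξ * ((l j).re - (l i).re) :=
    Fin.abs_sub_le_mul_sub_of_succ (f := fun j => (l j).im) (g := fun j => (l j).re) hΞ hij
  have hΞ0 (m : Fin n) : 0 ≤ Ξ :=
    nonneg_of_mul_nonneg_left ((abs_nonneg _).trans (hΞ m)) (sub_pos.2 (hre m))
  choose β hβ using fun m => exists_splitGap_ofReal_eq_zero (a := a) hmono (sub_pos.2 (hre m))
  obtain ⟨N, c, w, hN, hw, hsum, hcov⟩ := exists_intervals_cover_setOf_one_le_sum_expBump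
    (c := β) (r := fun _ => α * Ξ) (fun m => sub_pos.2 (hre m)) fun m => mul_nonneg hα (hΞ0 m)
  refine ⟨N, c, w, by simpa using hN, hw, hsum, fun z hz hdom => hcov z.re ?_⟩
  calc 1 ≤ ∑ m, exp (-|splitGap (logNormTerm a l z) m|) :=
        one_le_sum_exp_neg_abs_splitGap fun j => by
          simpa only [norm_mul_cexp_eq (ha _)] using hdom j
    _ ≤ _ := Finset.sum_le_sum fun m _ =>
        exp_neg_abs_splitGap_le_expBump hmono hΞ' (hΞ0 m) (hβ m) hz

end Exponentials

open Finset in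
lemma two_mul_le_sum_of_not_exists_dominant {k : ℕ} {T : ℕ → ℝ} (hT : ∀ i, 0 ≤ T i)
    (h : ¬ ∃ j < k, ∃ ε : ℝ, 0 < ε ∧ (1 + ε) * ∑ i ∈ (range k).erase j, T i ≤ T j) {j : ℕ}
    (hj : j < k) : 2 * T j ≤ ∑ i ∈ range k, T i := by
  push Not at h
  set R := ∑ i ∈ (range k).erase j, T i
  have hR : 0 ≤ R := sum_nonneg fun i _ => hT i
  have hTR : T j ≤ R := le_of_forall_pos_lt_add fun ε hε =>
    (h j hj (ε / (R + 1)) (by positivity)).trans_le <| by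
      have : R / (R + 1) ≤ 1 := div_le_one_of_le₀ (by linarith) (by positivity)
      rw [add_mul, one_mul, div_mul_eq_mul_div, mul_div_assoc]
      nlinarith
  rw [← add_sum_erase _ _ (mem_range.2 hj)]
  linarith

lemma one_le_log_four : 1 ≤ Real.log 4 := by
  rw [show (4 : ℝ) = 2 ^ 2 by norm_num, Real.log_pow]
  push_cast
  linarith [Real.log_two_gt_d9]

/-- For `y(z) = Σ_{j<k} a_j e^{λ_j z}` with simple exponents of increasing
real parts and nonzero coefficients, the complement in the strip `Π_α` of the domain of
single-term dominance can be covered by at most `k−1` boxes of height `2α` of total width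
at most `2α(k−1)Ξ + 2(k−1)Θ ln 4`. -/
theorem stmt_4 (k : ℕ) (hk : 2 ≤ k) (l : ℕ → ℂ)
    (hmono : ∀ j, j + 1 < k → (l j).re < (l (j + 1)).re)
    (a : ℕ → ℂ) (ha : ∀ j < k, a j ≠ 0)
    (Θ Ξ : ℝ)
    (hΘ : Θ = (Finset.range (k - 1)).sup' (Finset.nonempty_range_iff.mpr (by omega))
      fun j => ((l (j + 1)).re - (l j).re)⁻¹)
    (hΞ : Ξ = (Finset.range (k - 1)).sup' (Finset.nonempty_range_iff.mpr (by omega))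
      fun j => |(l (j + 1)).im - (l j).im| / ((l (j + 1)).re - (l j).re))
    (α : ℝ) (hα : 0 ≤ α) :
    ∃ (N : ℕ) (c w : ℕ → ℝ), N ≤ k - 1 ∧ (∀ i, 0 ≤ w i) ∧
      (∑ i ∈ Finset.range N, w i) ≤
        2 * α * ((k : ℝ) - 1) * Ξ + 2 * ((k : ℝ) - 1) * Θ * Real.log 4 ∧
      ∀ z : ℂ, |z.im| ≤ α →
        (¬ ∃ j < k, ∃ ε : ℝ, 0 < ε ∧
          (1 + ε) * ∑ i ∈ (Finset.range k).erase j,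
              ‖a i * Complex.exp (l i * z)‖
            ≤ ‖a j * Complex.exp (l j * z)‖) →
        ∃ i < N, c i ≤ z.re ∧ z.re ≤ c i + w i := by
  obtain ⟨n, rfl⟩ : ∃ n, k = n + 1 := ⟨k - 1, by omega⟩
  have hδ (m : ℕ) (hm : m < n) : 0 < (l (m + 1)).re - (l m).re := sub_pos.2 (hmono m (by omega))
  have hΘm (m : ℕ) (hm : m < n) : ((l (m + 1)).re - (l m).re)⁻¹ ≤ Θ :=
    hΘ ▸ Finset.le_sup' (fun j => ((l (j + 1)).re - (l j).re)⁻¹) (by simpa using hm)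
  have hΞm (m : ℕ) (hm : m < n) : |(l (m + 1)).im - (l m).im| ≤ Ξ * ((l (m + 1)).re - (l m).re) :=
    (div_le_iff₀ (hδ m hm)).1 <| hΞ ▸ Finset.le_sup'
      (fun j => |(l (j + 1)).im - (l j).im| / ((l (j + 1)).re - (l j).re)) (by simpa using hm)
  obtain ⟨N, c, w, hN, hw, hsum, hcov⟩ := exists_intervals_cover_of_forall_two_mul_le
    (a := fun j : Fin (n + 1) => a j) (l := fun j => l j) (fun j => ha j j.2)
    (fun m => hmono m (by omega)) (fun m => hΞm m m.2) hα
  refine ⟨N, c, w, by simpa using hN, hw, hsum.trans ?_, fun z hz hbad => hcov z hz fun j => ?_⟩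
  · have hΘ0 : 0 ≤ Θ := (inv_pos.2 (hδ 0 (by omega))).le.trans (hΘm 0 (by omega))
    calc _ ≤ ∑ _m : Fin n, (2 * (α * Ξ) + 2 * Θ * Real.log 4) :=
          Finset.sum_le_sum fun m _ => by
            have := hΘm m m.2
            simp only [Fin.val_succ, Fin.val_castSucc, div_eq_mul_inv]
            nlinarith [one_le_log_four]
      _ = _ := by
          simp only [Finset.sum_const, Finset.card_univ, Fintype.card_fin, nsmul_eq_mul,
            Nat.cast_add, Nat.cast_one, add_sub_cancel_right]
          ring
  · rw [Fin.sum_univ_eq_sum_range (fun i => ‖a i * Complex.exp (l i * z)‖)]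
    exact two_mul_le_sum_of_not_exists_dominant (fun i => norm_nonneg _) hbad j.2
end

section
/- Let k ≥ 2, let λ_1, …, λ_k ∈ ℂ with Re λ_1 < Re λ_2 < … < Re λ_k, let a_1, …, a_k be nonzero complex numbers, and set y(z) = Σ_{j=1}^k a_j e^{λ_j z}. Let u ∈ ℝ and let φ_u be the least concave majorant of the points (Re λ_j, ln|a_j| + u·Re λ_j), j = 1,…,k. If |φ_u(Re λ_{j+1}) − φ_u(Re λ_j)| ≥ ln 4 for every j = 1,…,k−1, then u ∈ G(y,0), i.e., there exist an index i and ε > 0 with |a_i e^{λ_i u}| ≥ (1+ε)·Σ_{j≠i} |a_j e^{λ_j u}|. -/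
/-- The least concave majorant of the points `(x j, y j)`, `j < k`, on the interval `[a, b]`:
its value at `μ` is the infimum of `ψ μ` over all functions `ψ : ℝ → ℝ` concave on `[a, b]`
with `ψ (x j) ≥ y j` for all `j < k`. -/
noncomputable def leastConcaveMajorant (a b : ℝ) (k : ℕ) (x y : ℕ → ℝ) (μ : ℝ) : ℝ :=
  sInf {t : ℝ | ∃ ψ : ℝ → ℝ, ConcaveOn ℝ (Set.Icc a b) ψ ∧
    (∀ j < k, y j ≤ ψ (x j)) ∧ t = ψ μ}

/-!
Let `F` be the least concave majorant and `i` an index maximising `ln|a_i| + u Re λ_i`. The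
constant function with that value is an admissible majorant, so `F` attains its maximum at the
node `Re λ_i`. Concavity then makes `F` nondecreasing on the nodes left of it and nonincreasing on
those right of it, so each step of size at least `ln 4` is a rise before `i` and a drop after it.
Hence `|a_j e^{λ_j u}| ≤ 4^{-|j-i|} |a_i e^{λ_i u}|`, and the two geometric tails add up to at
most `2/3` of the `i`-th term, which gives `ε = 1/2`.
-/

open Finset

theorem sum_range_pow_succ_le {r : ℝ} (hr0 : 0 ≤ r) (hr1 : r < 1) (n : ℕ) :
    ∑ j ∈ range n, r ^ (j + 1) ≤ r / (1 - r) := by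
  have h := geom_sum_Ico_le_of_lt_one (m := 1) (n := n + 1) hr0 hr1
  rw [sum_Ico_eq_sum_range, add_tsub_cancel_right, pow_one] at h
  simpa only [add_comm 1] using h

theorem sum_erase_pow_dist_le {r : ℝ} (hr0 : 0 ≤ r) (hr1 : r < 1) (i k : ℕ) :
    ∑ j ∈ (range k).erase i, r ^ Nat.dist j i ≤ 2 * r / (1 - r) := by
  have hsub : (range k).erase i ⊆ range i ∪ Ico (i + 1) k := by
    intro j
    simp only [mem_erase, mem_range, mem_union, mem_Ico]
    omega
  have hdisj : Disjoint (range i) (Ico (i + 1) k) := by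
    simp only [disjoint_left, mem_range, mem_Ico]
    omega
  have hleft : ∑ j ∈ range i, r ^ Nat.dist j i = ∑ j ∈ range i, r ^ (j + 1) := by
    rw [← sum_range_reflect]
    refine sum_congr rfl fun j hj => ?_
    have := mem_range.1 hj
    rw [Nat.dist_eq_sub_of_le (by omega), show i - (i - 1 - j) = j + 1 by omega]
  have hright :
      ∑ j ∈ Ico (i + 1) k, r ^ Nat.dist j i = ∑ j ∈ range (k - (i + 1)), r ^ (j + 1) := by
    rw [sum_Ico_eq_sum_range]
    refine sum_congr rfl fun j _ => ?_
    rw [Nat.dist_eq_sub_of_le_right (by omega), show i + 1 + j - i = j + 1 by omega]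
  calc ∑ j ∈ (range k).erase i, r ^ Nat.dist j i
      ≤ ∑ j ∈ range i ∪ Ico (i + 1) k, r ^ Nat.dist j i :=
        sum_le_sum_of_subset_of_nonneg hsub fun _ _ _ => pow_nonneg hr0 _
    _ = ∑ j ∈ range i, r ^ (j + 1) + ∑ j ∈ range (k - (i + 1)), r ^ (j + 1) := by
        rw [sum_union hdisj, hleft, hright]
    _ ≤ r / (1 - r) + r / (1 - r) :=
        add_le_add (sum_range_pow_succ_le hr0 hr1 _) (sum_range_pow_succ_le hr0 hr1 _)
    _ = 2 * r / (1 - r) := by ring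

theorem le_sub_mul_dist_of_steps {f : ℕ → ℝ} {c : ℝ} {i k : ℕ}
    (hdesc : ∀ j, i ≤ j → j + 1 < k → f (j + 1) ≤ f j - c)
    (hasc : ∀ j < i, f j ≤ f (j + 1) - c) {j : ℕ} (hj : j < k) :
    f j ≤ f i - c * Nat.dist j i := by
  rcases le_or_gt i j with hij | hji
  · rw [Nat.dist_eq_sub_of_le_right hij]
    induction j, hij using Nat.le_induction with
    | base => simp
    | succ j hij ih =>
      have hstep := hdesc j hij hj
      have hprev := ih (by omega)
      rw [Nat.sub_add_comm hij]
      push_cast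
      linarith
  · rw [Nat.dist_eq_sub_of_le hji.le]
    obtain ⟨n, hn, rfl⟩ : ∃ n ≤ i, j = i - n := ⟨i - j, by omega, by omega⟩
    rw [Nat.sub_sub_self hn]
    clear hj hji
    induction n with
    | zero => simp
    | succ n ih =>
      have hprev := ih (by omega)
      have hstep := hasc (i - (n + 1)) (by omega)
      rw [show i - (n + 1) + 1 = i - n by omega] at hstep
      push_cast
      linarith

section SampledConcave

variable {F : ℝ → ℝ} {s : Set ℝ} {x : ℕ → ℝ} {k i j : ℕ}

theorem ConcaveOn.map_succ_le_of_le_map (hF : ConcaveOn ℝ s F) (hs : ∀ j < k, x j ∈ s)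
    (hx : StrictMonoOn x (Set.Iio k)) (hmax : ∀ j < k, F (x j) ≤ F (x i)) (hij : i ≤ j)
    (hj : j + 1 < k) : F (x (j + 1)) ≤ F (x j) := by
  obtain rfl | hij := hij.eq_or_lt
  · exact hmax _ hj
  · have hjk : j < k := by omega
    have hik : i < k := by omega
    exact hF.right_le_of_le_left'' (hs i hik) (hs _ hj) (hx hik hjk hij)
      (hx hjk hj j.lt_succ_self).le (hmax j hjk)

theorem ConcaveOn.map_le_map_succ_of_le_map (hF : ConcaveOn ℝ s F) (hs : ∀ j < k, x j ∈ s)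
    (hx : StrictMonoOn x (Set.Iio k)) (hi : i < k) (hmax : ∀ j < k, F (x j) ≤ F (x i))
    (hji : j < i) : F (x j) ≤ F (x (j + 1)) := by
  obtain rfl | hji := (show j + 1 ≤ i by omega).eq_or_lt
  · exact hmax j (by omega)
  · have hjk : j + 1 < k := by omega
    exact hF.left_le_of_le_right'' (hs j (by omega)) (hs i hi)
      (hx (show j < k by omega) hjk j.lt_succ_self).le (hx hjk hi hji) (hmax _ hjk)

end SampledConcave

section LeastConcaveMajorant

variable {a b : ℝ} {k : ℕ} {x y : ℕ → ℝ}

theorem exists_concaveOn_majorant (a b : ℝ) (k : ℕ) (x y : ℕ → ℝ) :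
    ∃ ψ : ℝ → ℝ, ConcaveOn ℝ (Set.Icc a b) ψ ∧ ∀ j < k, y j ≤ ψ (x j) := by
  obtain ⟨M, hM⟩ := ((range k).image y).bddAbove
  exact ⟨fun _ => M, concaveOn_const M (convex_Icc a b),
    fun j hj => hM (mem_image_of_mem y (mem_range.2 hj))⟩

theorem le_leastConcaveMajorant {j : ℕ} (hj : j < k) :
    y j ≤ leastConcaveMajorant a b k x y (x j) := by
  obtain ⟨ψ₀, hψ₀, hψ₀y⟩ := exists_concaveOn_majorant a b k x y
  refine le_csInf ⟨_, ψ₀, hψ₀, hψ₀y, rfl⟩ ?_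
  rintro _ ⟨ψ, -, hψy, rfl⟩
  exact hψy j hj

theorem leastConcaveMajorant_le (hxa : ∃ p < k, x p = a) (hxb : ∃ q < k, x q = b)
    {ψ : ℝ → ℝ} (hψ : ConcaveOn ℝ (Set.Icc a b) ψ) (hψy : ∀ j < k, y j ≤ ψ (x j)) {μ : ℝ}
    (hμ : μ ∈ Set.Icc a b) : leastConcaveMajorant a b k x y μ ≤ ψ μ := by
  obtain ⟨p, hp, rfl⟩ := hxa
  obtain ⟨q, hq, rfl⟩ := hxb
  refine csInf_le ⟨min (y p) (y q), ?_⟩ ⟨ψ, hψ, hψy, rfl⟩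
  rintro _ ⟨φ, hφ, hφy, rfl⟩
  have hpq : x p ≤ x q := hμ.1.trans hμ.2
  calc min (y p) (y q) ≤ min (φ (x p)) (φ (x q)) := min_le_min (hφy p hp) (hφy q hq)
    _ ≤ φ μ := hφ.min_le_of_mem_Icc ⟨le_rfl, hpq⟩ ⟨hpq, le_rfl⟩ hμ

theorem concaveOn_leastConcaveMajorant (hxa : ∃ p < k, x p = a) (hxb : ∃ q < k, x q = b) :
    ConcaveOn ℝ (Set.Icc a b) (leastConcaveMajorant a b k x y) := by
  refine ⟨convex_Icc a b, fun μ hμ ν hν s t hs ht hst => ?_⟩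
  obtain ⟨ψ₀, hψ₀, hψ₀y⟩ := exists_concaveOn_majorant a b k x y
  refine le_csInf ⟨_, ψ₀, hψ₀, hψ₀y, rfl⟩ ?_
  rintro _ ⟨ψ, hψ, hψy, rfl⟩
  calc s • leastConcaveMajorant a b k x y μ + t • leastConcaveMajorant a b k x y ν
      ≤ s • ψ μ + t • ψ ν := by
        gcongr
        · exact leastConcaveMajorant_le hxa hxb hψ hψy hμ
        · exact leastConcaveMajorant_le hxa hxb hψ hψy hν
    _ ≤ ψ (s • μ + t • ν) := hψ.2 hμ hν hs ht hst

theorem exists_le_sub_mul_dist_of_leastConcaveMajorant_steps (hk : 0 < k)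
    (hx : ∀ j, j + 1 < k → x j < x (j + 1)) {c : ℝ}
    (hsteps : ∀ j, j + 1 < k →
      c ≤ |leastConcaveMajorant (x 0) (x (k - 1)) k x y (x (j + 1))
        - leastConcaveMajorant (x 0) (x (k - 1)) k x y (x j)|) :
    ∃ i < k, ∀ j < k, y j ≤ y i - c * Nat.dist j i := by
  set F := leastConcaveMajorant (x 0) (x (k - 1)) k x y
  have hxs : StrictMonoOn x (Set.Iio k) :=
    (strictMonoOn_Iic_of_lt_succ (n := k - 1) fun m hm => hx m (by omega)).mono
      fun j (hj : j < k) => show j ≤ k - 1 by omega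
  have hmem : ∀ j < k, x j ∈ Set.Icc (x 0) (x (k - 1)) := fun j hj =>
    ⟨hxs.monotoneOn hk hj j.zero_le, hxs.monotoneOn hj (show k - 1 < k by omega) (by omega)⟩
  have hxa : ∃ p < k, x p = x 0 := ⟨0, hk, rfl⟩
  have hxb : ∃ q < k, x q = x (k - 1) := ⟨k - 1, by omega, rfl⟩
  have hF : ConcaveOn ℝ (Set.Icc (x 0) (x (k - 1))) F := concaveOn_leastConcaveMajorant hxa hxb
  obtain ⟨i, hi, hyi⟩ := (range k).exists_max_image y (nonempty_range_iff.2 hk.ne')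
  replace hi := mem_range.1 hi
  have hFle : ∀ μ ∈ Set.Icc (x 0) (x (k - 1)), F μ ≤ y i := fun μ hμ =>
    leastConcaveMajorant_le hxa hxb (concaveOn_const _ (convex_Icc _ _))
      (fun j hj => hyi j (mem_range.2 hj)) hμ
  have hmax : ∀ j < k, F (x j) ≤ F (x i) := fun j hj =>
    (hFle _ (hmem j hj)).trans (le_leastConcaveMajorant hi)
  have hdesc : ∀ j, i ≤ j → j + 1 < k → F (x (j + 1)) ≤ F (x j) - c := fun j hij hj => by
    have hle := hF.map_succ_le_of_le_map hmem hxs hmax hij hj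
    have hc := hsteps j hj
    rw [abs_of_nonpos (sub_nonpos.2 hle)] at hc
    linarith
  have hasc : ∀ j < i, F (x j) ≤ F (x (j + 1)) - c := fun j hji => by
    have hle := hF.map_le_map_succ_of_le_map hmem hxs hi hmax hji
    have hc := hsteps j (by omega)
    rw [abs_of_nonneg (sub_nonneg.2 hle)] at hc
    linarith
  refine ⟨i, hi, fun j hj => ?_⟩
  calc y j ≤ F (x j) := le_leastConcaveMajorant hj
    _ ≤ F (x i) - c * Nat.dist j i := le_sub_mul_dist_of_steps (f := F ∘ x) hdesc hasc hj
    _ ≤ y i - c * Nat.dist j i := by linarith [hFle _ (hmem i hi)]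

end LeastConcaveMajorant

theorem norm_mul_exp_mul_ofReal {a : ℂ} (ha : a ≠ 0) (z : ℂ) (u : ℝ) :
    ‖a * Complex.exp (z * u)‖ = Real.exp (Real.log ‖a‖ + u * z.re) := by
  rw [norm_mul, Complex.norm_exp, Complex.re_mul_ofReal, Real.exp_add,
    Real.exp_log (norm_pos_iff.2 ha), mul_comm u]

/-- If every consecutive increment of the least concave majorant `φ_u` of the
points `(Re λ_j, ln|a_j| + u Re λ_j)` is at least `ln 4` in absolute value, then `u` lies in
the domain of single-term dominance of `y(z) = Σ_j a_j e^{λ_j z}` on the real line. -/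
theorem stmt_6 (k : ℕ) (hk : 2 ≤ k) (l : ℕ → ℂ)
    (hmono : ∀ j, j + 1 < k → (l j).re < (l (j + 1)).re)
    (a : ℕ → ℂ) (ha : ∀ j < k, a j ≠ 0) (u : ℝ)
    (h : ∀ j, j + 1 < k →
      Real.log 4 ≤
        |leastConcaveMajorant ((l 0).re) ((l (k - 1)).re) k (fun j => (l j).re)
            (fun j => Real.log ‖a j‖ + u * (l j).re) ((l (j + 1)).re)
         - leastConcaveMajorant ((l 0).re) ((l (k - 1)).re) k (fun j => (l j).re)
            (fun j => Real.log ‖a j‖ + u * (l j).re) ((l j).re)|) :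
    ∃ i < k, ∃ ε : ℝ, 0 < ε ∧
      (1 + ε) * ∑ j ∈ (Finset.range k).erase i,
          ‖a j * Complex.exp (l j * (u : ℂ))‖
        ≤ ‖a i * Complex.exp (l i * (u : ℂ))‖ := by
  obtain ⟨i, hi, hpeak⟩ :=
    exists_le_sub_mul_dist_of_leastConcaveMajorant_steps (by omega) hmono h
  have hterm : ∀ j ∈ (range k).erase i, ‖a j * Complex.exp (l j * (u : ℂ))‖
      ≤ ‖a i * Complex.exp (l i * (u : ℂ))‖ * (1 / 4) ^ Nat.dist j i := fun j hj => by
    have hjk := mem_range.1 (mem_of_mem_erase hj)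
    rw [norm_mul_exp_mul_ofReal (ha j hjk), norm_mul_exp_mul_ofReal (ha i hi)]
    calc _ ≤ Real.exp (Real.log ‖a i‖ + u * (l i).re - Real.log 4 * Nat.dist j i) :=
          Real.exp_le_exp.2 (hpeak j hjk)
      _ = _ := by
          rw [Real.exp_sub, mul_comm (Real.log 4), Real.exp_nat_mul, Real.exp_log four_pos,
            div_eq_mul_inv, one_div, inv_pow]
  refine ⟨i, hi, 1 / 2, by norm_num, ?_⟩
  calc (1 + 1 / 2) * ∑ j ∈ (range k).erase i, ‖a j * Complex.exp (l j * (u : ℂ))‖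
      ≤ (1 + 1 / 2) * ∑ j ∈ (range k).erase i,
          ‖a i * Complex.exp (l i * (u : ℂ))‖ * (1 / 4) ^ Nat.dist j i := by
        gcongr with j hj
        exact hterm j hj
    _ = (1 + 1 / 2) * (‖a i * Complex.exp (l i * (u : ℂ))‖
          * ∑ j ∈ (range k).erase i, (1 / 4 : ℝ) ^ Nat.dist j i) := by
        rw [← mul_sum]
    _ ≤ (1 + 1 / 2) * (‖a i * Complex.exp (l i * (u : ℂ))‖ * (2 * (1 / 4) / (1 - 1 / 4))) := by
        gcongr
        exact sum_erase_pow_dist_le (by norm_num) (by norm_num) i k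
    _ = ‖a i * Complex.exp (l i * (u : ℂ))‖ := by ring
end

section
/- Let k ≥ 1, let A and B be nonzero polynomials with complex coefficients with deg A + deg B ≤ k, let λ, λ' ∈ ℂ with θ := Re(λ − λ') ≠ 0, and let Θ > 0 satisfy Θ ≥ |θ|^{−1}. Fix v ∈ ℝ and suppose u₀ ∈ ℝ is such that |Re((u₀ + iv) − z_m)| ≥ 4kΘ for every root z_m of A and of B (in particular A and B do not vanish at u₀ + iv). Then the function u ↦ ln|A(u+iv) e^{λ(u+iv)} / (B(u+iv) e^{λ'(u+iv)})| is differentiable at u₀ and the absolute value of its derivative at u₀ is at least |θ|/2. -/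
/-!
Along a horizontal line, `d/du log ‖g (u + v i)‖ = Re (g'/g)`. For
`g = A e^{λ z} / (B e^{λ' z})` this logarithmic derivative is `A'/A - B'/B + (λ - λ')`,
and `A'/A = ∑ 1/(z - r)` over the roots `r` of `A`. Every root lies at distance at least
`4kΘ` from `u₀ + v i`, so `‖A'/A - B'/B‖ ≤ (deg A + deg B)/(4kΘ) ≤ 1/(4Θ) ≤ |θ|/4`,
which cannot cancel more than a quarter of `θ`.
-/

open Polynomial Complex
open scoped InnerProductSpace

theorem HasDerivAt.log_norm {F : Type*} [NormedAddCommGroup F] [InnerProductSpace ℝ F]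
    {f : ℝ → F} {f' : F} {x : ℝ} (hf : HasDerivAt f f' x) (hx : f x ≠ 0) :
    HasDerivAt (fun t => Real.log ‖f t‖) (⟪f x, f'⟫_ℝ / ‖f x‖ ^ 2) x := by
  have hpos : 0 < ‖f x‖ := norm_pos_iff.2 hx
  have hsq : (fun t => Real.log ‖f t‖) = fun t => Real.log (‖f t‖ ^ 2) / 2 := by
    funext t
    rw [Real.log_pow]
    push_cast
    ring
  rw [hsq]
  refine ((hf.norm_sq.log (by positivity)).div_const 2).congr_deriv ?_
  field_simp

theorem Complex.re_div_eq_inner_div_norm_sq (w w' : ℂ) :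
    (w' / w).re = ⟪w, w'⟫_ℝ / ‖w‖ ^ 2 := by
  rw [Complex.inner, Complex.div_re, ← Complex.normSq_eq_norm_sq]
  simp only [Complex.mul_re, Complex.conj_re, Complex.conj_im]
  ring

theorem hasDerivAt_log_norm_comp_add_mul_I {g : ℂ → ℂ} {u v : ℝ}
    (hg : DifferentiableAt ℂ g (u + v * I)) (h0 : g (u + v * I) ≠ 0) :
    HasDerivAt (fun t : ℝ => Real.log ‖g (t + v * I)‖) (logDeriv g (u + v * I)).re u := by
  have hline : HasDerivAt (fun t : ℝ => (t : ℂ) + v * I) 1 u :=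
    (hasDerivAt_id u).ofReal_comp.add_const _
  have hcomp := hg.hasDerivAt.comp_of_eq u hline rfl
  rw [mul_one] at hcomp
  rw [logDeriv_apply, Complex.re_div_eq_inner_div_norm_sq]
  exact hcomp.log_norm h0

theorem differentiableAt_eval_mul_cexp (P : ℂ[X]) (c z : ℂ) :
    DifferentiableAt ℂ (fun w => P.eval w * cexp (c * w)) z :=
  P.differentiableAt.mul (by fun_prop)

theorem logDeriv_eval_mul_cexp (P : ℂ[X]) (c z : ℂ) (hz : P.eval z ≠ 0) :
    logDeriv (fun w => P.eval w * cexp (c * w)) z = P.derivative.eval z / P.eval z + c := by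
  rw [logDeriv_mul (f := fun w => P.eval w) (g := fun w => cexp (c * w)) z hz
    (Complex.exp_ne_zero _) P.differentiableAt (by fun_prop), logDeriv_apply, Polynomial.deriv,
    logDeriv_apply, (((hasDerivAt_id' z).const_mul c).cexp).deriv]
  field_simp

theorem logDeriv_eval_mul_cexp_div_eval_mul_cexp (A B : ℂ[X]) (c c' z : ℂ)
    (hA : A.eval z ≠ 0) (hB : B.eval z ≠ 0) :
    logDeriv (fun w => A.eval w * cexp (c * w) / (B.eval w * cexp (c' * w))) z
      = A.derivative.eval z / A.eval z - B.derivative.eval z / B.eval z + (c - c') := by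
  rw [logDeriv_div (f := fun w => A.eval w * cexp (c * w)) _ (by simpa using hA)
    (by simpa using hB) (differentiableAt_eval_mul_cexp A c z)
    (differentiableAt_eval_mul_cexp B c' z), logDeriv_eval_mul_cexp _ _ _ hA,
    logDeriv_eval_mul_cexp _ _ _ hB]
  ring

section RootsFarAway

variable {P : ℂ[X]} {z : ℂ} {ε : ℝ}

theorem eval_ne_zero_of_forall_isRoot_le_norm (hε : 0 < ε)
    (h : ∀ r, P.IsRoot r → ε ≤ ‖z - r‖) : P.eval z ≠ 0 :=
  fun h0 => by simpa [hε.not_ge] using h z h0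

theorem norm_eval_derivative_div_eval_le (hε : 0 < ε) (h : ∀ r, P.IsRoot r → ε ≤ ‖z - r‖) :
    ‖P.derivative.eval z / P.eval z‖ ≤ P.natDegree / ε := by
  have hroot : ∀ r ∈ P.roots, ε ≤ ‖z - r‖ := fun r hr => h r (isRoot_of_mem_roots hr)
  rw [(IsAlgClosed.splits P).eval_derivative_div_eval_of_ne_zero
    (eval_ne_zero_of_forall_isRoot_le_norm hε h)]
  calc ‖(P.roots.map fun r => 1 / (z - r)).sum‖
      ≤ (P.roots.map fun r => ‖1 / (z - r)‖).sum := by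
        simpa [Multiset.map_map] using norm_multiset_sum_le (P.roots.map fun r => 1 / (z - r))
    _ ≤ (P.roots.map fun _ => 1 / ε).sum := by
        refine Multiset.sum_map_le_sum_map _ _ fun r hr => ?_
        rw [norm_div, norm_one]
        exact one_div_le_one_div_of_le hε (hroot r hr)
    _ ≤ P.natDegree / ε := by
        rw [Multiset.map_const', Multiset.sum_replicate, nsmul_eq_mul, mul_one_div]
        gcongr
        exact_mod_cast card_roots' P

theorem norm_sub_eval_derivative_div_eval_le {Q : ℂ[X]} (hε : 0 < ε)
    (hP : ∀ r, P.IsRoot r → ε ≤ ‖z - r‖) (hQ : ∀ r, Q.IsRoot r → ε ≤ ‖z - r‖) :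
    ‖P.derivative.eval z / P.eval z - Q.derivative.eval z / Q.eval z‖
      ≤ (P.natDegree + Q.natDegree) / ε := by
  rw [add_div]
  exact (norm_sub_le _ _).trans (add_le_add (norm_eval_derivative_div_eval_le hε hP)
    (norm_eval_derivative_div_eval_le hε hQ))

end RootsFarAway

theorem half_abs_re_le_abs_re_add {w c : ℂ} (hw : ‖w‖ ≤ |c.re| / 4) :
    |c.re| / 2 ≤ |(w + c).re| := by
  have h := abs_sub_abs_le_abs_sub c.re (-w.re)
  rw [sub_neg_eq_add, abs_neg, add_comm] at h
  rw [add_re]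
  linarith [abs_re_le_norm w, abs_nonneg c.re]

theorem stmt_15_general (k : ℕ) (hk : 1 ≤ k) (A B : Polynomial ℂ)
    (hdeg : A.natDegree + B.natDegree ≤ k)
    (lam lam' : ℂ) (hθ : (lam - lam').re ≠ 0)
    (Θ : ℝ) (hΘ : |(lam - lam').re|⁻¹ ≤ Θ)
    (v u₀ : ℝ)
    (hroots : ∀ w : ℂ, (A.IsRoot w ∨ B.IsRoot w) →
      4 * (k : ℝ) * Θ ≤ |(((u₀ : ℂ) + (v : ℂ) * Complex.I) - w).re|) :
    DifferentiableAt ℝ (fun u : ℝ => Real.log (Norm.norm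
        (A.eval ((u : ℂ) + (v : ℂ) * Complex.I) *
            Complex.exp (lam * ((u : ℂ) + (v : ℂ) * Complex.I)) /
         (B.eval ((u : ℂ) + (v : ℂ) * Complex.I) *
            Complex.exp (lam' * ((u : ℂ) + (v : ℂ) * Complex.I)))))) u₀ ∧
      |(lam - lam').re| / 2 ≤
        |deriv (fun u : ℝ => Real.log (Norm.norm
          (A.eval ((u : ℂ) + (v : ℂ) * Complex.I) *
              Complex.exp (lam * ((u : ℂ) + (v : ℂ) * Complex.I)) /
           (B.eval ((u : ℂ) + (v : ℂ) * Complex.I) *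
              Complex.exp (lam' * ((u : ℂ) + (v : ℂ) * Complex.I)))))) u₀| := by
  set z₀ : ℂ := (u₀ : ℂ) + (v : ℂ) * Complex.I
  set θ := (lam - lam').re
  have hθ0 : 0 < |θ| := abs_pos.2 hθ
  have hΘθ : 1 ≤ |θ| * Θ := (inv_le_iff_one_le_mul₀' hθ0).1 hΘ
  have hε : 0 < 4 * (k : ℝ) * Θ := by
    have : (1 : ℝ) ≤ k := by exact_mod_cast hk
    have := (inv_pos.2 hθ0).trans_le hΘ
    positivity
  have hA : ∀ w, A.IsRoot w → 4 * (k : ℝ) * Θ ≤ ‖z₀ - w‖ :=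
    fun w hw => (hroots w (.inl hw)).trans (abs_re_le_norm _)
  have hB : ∀ w, B.IsRoot w → 4 * (k : ℝ) * Θ ≤ ‖z₀ - w‖ :=
    fun w hw => (hroots w (.inr hw)).trans (abs_re_le_norm _)
  have hA0 := eval_ne_zero_of_forall_isRoot_le_norm hε hA
  have hB0 := eval_ne_zero_of_forall_isRoot_le_norm hε hB
  have hsmall : ‖A.derivative.eval z₀ / A.eval z₀ - B.derivative.eval z₀ / B.eval z₀‖
      ≤ |θ| / 4 := calc
    _ ≤ (A.natDegree + B.natDegree) / (4 * (k : ℝ) * Θ) :=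
      norm_sub_eval_derivative_div_eval_le hε hA hB
    _ ≤ k / (4 * (k : ℝ) * Θ) := by gcongr; exact_mod_cast hdeg
    _ ≤ |θ| / 4 := by rw [div_le_iff₀ hε]; nlinarith
  have hderiv := hasDerivAt_log_norm_comp_add_mul_I (u := u₀) (v := v)
    (g := fun z => A.eval z * cexp (lam * z) / (B.eval z * cexp (lam' * z)))
    ((differentiableAt_eval_mul_cexp A lam z₀).div (differentiableAt_eval_mul_cexp B lam' z₀)
      (by simpa using hB0)) (by simpa using ⟨hA0, hB0⟩)
  refine ⟨hderiv.differentiableAt, ?_⟩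
  rw [hderiv.deriv, logDeriv_eval_mul_cexp_div_eval_mul_cexp A B lam lam' z₀ hA0 hB0]
  exact half_abs_re_le_abs_re_add hsmall

/-- Let `A, B` be nonzero polynomials with `deg A + deg B ≤ k`, let
`θ = Re(λ − λ') ≠ 0` and `Θ ≥ |θ|⁻¹`, `Θ > 0`. If `u₀ + iv` is at horizontal distance at
least `4kΘ` from every root of `A` and of `B`, then
`u ↦ ln|A(u+iv) e^{λ(u+iv)} / (B(u+iv) e^{λ'(u+iv)})|` is differentiable at `u₀` and the
absolute value of its derivative there is at least `|θ|/2`. -/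
theorem stmt_15 (k : ℕ) (hk : 1 ≤ k) (A B : Polynomial ℂ) (hA : A ≠ 0) (hB : B ≠ 0)
    (hdeg : A.natDegree + B.natDegree ≤ k)
    (lam lam' : ℂ) (hθ : (lam - lam').re ≠ 0)
    (Θ : ℝ) (hΘpos : 0 < Θ) (hΘ : |(lam - lam').re|⁻¹ ≤ Θ)
    (v u₀ : ℝ)
    (hroots : ∀ w : ℂ, (A.IsRoot w ∨ B.IsRoot w) →
      4 * (k : ℝ) * Θ ≤ |(((u₀ : ℂ) + (v : ℂ) * Complex.I) - w).re|) :
    DifferentiableAt ℝ (fun u : ℝ => Real.log (Norm.norm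
        (A.eval ((u : ℂ) + (v : ℂ) * Complex.I) *
            Complex.exp (lam * ((u : ℂ) + (v : ℂ) * Complex.I)) /
         (B.eval ((u : ℂ) + (v : ℂ) * Complex.I) *
            Complex.exp (lam' * ((u : ℂ) + (v : ℂ) * Complex.I)))))) u₀ ∧
      |(lam - lam').re| / 2 ≤
        |deriv (fun u : ℝ => Real.log (Norm.norm
          (A.eval ((u : ℂ) + (v : ℂ) * Complex.I) *
              Complex.exp (lam * ((u : ℂ) + (v : ℂ) * Complex.I)) /
           (B.eval ((u : ℂ) + (v : ℂ) * Complex.I) *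
              Complex.exp (lam' * ((u : ℂ) + (v : ℂ) * Complex.I)))))) u₀| :=
  stmt_15_general k hk A B hdeg lam lam' hθ Θ hΘ v u₀ hroots
end
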